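/- Let n ≥ 1. The number of pairs (ε, π), with ε : Fin n → {±1} and π a permutation of Fin n, such that for every i the product of ε over the π-orbit of i equals −1 and additionally the product of all values ε i over i ∈ Fin n equals −1 (equivalently, the number of cycles of π is odd), is n·(2n−3)!!. -/
import Mathlib


open Finset Nat

/-- The orbit (cycle) of `i` under the permutation `π`, as a finset. -/
def cycleOrbit {n : ℕ} (π : Equiv.Perm (Fin n)) (i : Fin n) : Finset (Fin n) :=
  Finset.univ.filter fun j => π.SameCycle i j

/-- `(ε, π)` has only negative cycles: the product of `ε` over every `π`-orbit is `-1`. -/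
def OnlyNegativeCycles {n : ℕ} (w : (Fin n → ℤˣ) × Equiv.Perm (Fin n)) : Prop :=
  ∀ i : Fin n, ∏ j ∈ cycleOrbit w.2 i, w.1 j = -1

namespace SP
open Equiv Equiv.Perm

variable {n : ℕ}

lemma mem_cycleOrbit {π : Perm (Fin n)} {i j : Fin n} :
    j ∈ cycleOrbit π i ↔ π.SameCycle i j := by
  simp [cycleOrbit]

lemma sameCycle_of_nat {π : Perm (Fin n)} {i j : Fin n} (k : ℕ) (h : (π ^ k) i = j) :
    π.SameCycle i j := ⟨(k : ℤ), by simpa using h⟩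

lemma mem_closed {π : Perm (Fin n)} {s : Finset (Fin n)}
    (hs : ∀ x ∈ s, π x ∈ s) {i j : Fin n} (hi : i ∈ s) (h : π.SameCycle i j) : j ∈ s := by
  obtain ⟨k, -, rfl⟩ := h.exists_pow_eq'
  clear h
  induction k with
  | zero => simpa using hi
  | succ m ih =>
    have : (π ^ (m + 1)) i = π ((π ^ m) i) := by
      have h2 : π ^ (m + 1) = π * π ^ m := pow_succ' π m
      rw [h2]; rfl
    rw [this]
    exact hs _ ih

lemma cycleOrbit_of_fixed {π : Perm (Fin n)} {i : Fin n} (h : π i = i) :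
    cycleOrbit π i = {i} := by
  ext j
  simp only [mem_cycleOrbit, Finset.mem_singleton]
  constructor
  · intro hj
    have := mem_closed (s := {i}) (by simp [h]) (Finset.mem_singleton_self i) hj
    simpa using this
  · rintro rfl; exact Equiv.Perm.SameCycle.refl _ _

lemma cycleOrbit_congr {π : Perm (Fin n)} {i j : Fin n} (h : π.SameCycle i j) :
    cycleOrbit π i = cycleOrbit π j := by
  ext x
  simp only [mem_cycleOrbit]
  exact ⟨fun hx => h.symm.trans hx, fun hx => h.trans hx⟩

end SP

namespace SP2
open Equiv Equiv.Perm SP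

variable {n : ℕ} (e : Equiv.Perm (Fin n))

lemma zero_apply_succ (x : Fin n) :
    Equiv.Perm.decomposeFin.symm ((0 : Fin (n+1)), e) x.succ = (e x).succ := by
  rw [Equiv.Perm.decomposeFin_symm_apply_succ]
  simp

lemma pow_zero_succ (a : Fin n) (k : ℕ) :
    ((Equiv.Perm.decomposeFin.symm ((0 : Fin (n+1)), e)) ^ k) a.succ = ((e ^ k) a).succ := by
  induction k with
  | zero => simp
  | succ m ih =>
    have h2 : ∀ (f : Equiv.Perm (Fin (n+1))) (j), (f ^ (m+1)) j = f ((f ^ m) j) := by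
      intro f j
      have := pow_succ' f m
      rw [this]; rfl
    have h3 : (e ^ (m+1)) a = e ((e ^ m) a) := by
      have := pow_succ' e m
      rw [this]; rfl
    rw [h2, ih, h3, zero_apply_succ]

lemma orbit_zero_zero :
    cycleOrbit (Equiv.Perm.decomposeFin.symm ((0 : Fin (n+1)), e)) 0 = {0} :=
  cycleOrbit_of_fixed (by simp)

lemma orbit_zero_succ (a : Fin n) :
    cycleOrbit (Equiv.Perm.decomposeFin.symm ((0 : Fin (n+1)), e)) a.succ
      = (cycleOrbit e a).map (Fin.succEmb n) := by
  ext j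
  simp only [mem_cycleOrbit, Finset.mem_map]
  constructor
  · intro hj
    have hm := mem_closed (s := (cycleOrbit e a).map (Fin.succEmb n)) ?_ ?_ hj
    · simpa only [Finset.mem_map, mem_cycleOrbit] using hm
    · rintro x hx
      simp only [Finset.mem_map, mem_cycleOrbit] at hx ⊢
      obtain ⟨b, hb, rfl⟩ := hx
      exact ⟨e b, hb.trans ⟨1, by simp⟩, by simp [zero_apply_succ e b]⟩
    · exact Finset.mem_map.2 ⟨a, mem_cycleOrbit.2 (SameCycle.refl _ _), rfl⟩
  · rintro ⟨b, hb, rfl⟩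
    obtain ⟨k, -, rfl⟩ := hb.exists_pow_eq'
    exact sameCycle_of_nat k (by simpa using pow_zero_succ e a k)

end SP2

namespace SP3
open Equiv Equiv.Perm SP

variable {n : ℕ} (e : Equiv.Perm (Fin n)) (q : Fin n)

lemma one_apply_zero :
    Equiv.Perm.decomposeFin.symm (q.succ, e) (0 : Fin (n+1)) = q.succ :=
  Equiv.Perm.decomposeFin_symm_apply_zero _ _

lemma one_apply_succ (x : Fin n) :
    Equiv.Perm.decomposeFin.symm (q.succ, e) x.succ
      = if e x = q then 0 else (e x).succ := by
  rw [Equiv.Perm.decomposeFin_symm_apply_succ]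
  split_ifs with h
  · rw [h]; exact Equiv.swap_apply_right _ _
  · exact Equiv.swap_apply_of_ne_of_ne (Fin.succ_ne_zero _)
      (by simpa [Fin.succ_inj] using h)

lemma step_sameCycle (x : Fin n) :
    (Equiv.Perm.decomposeFin.symm (q.succ, e)).SameCycle x.succ (e x).succ := by
  by_cases h : e x = q
  · have h1 : (Equiv.Perm.decomposeFin.symm (q.succ, e)).SameCycle x.succ 0 :=
      ⟨1, by simp [one_apply_succ, h]⟩
    have h2 : (Equiv.Perm.decomposeFin.symm (q.succ, e)).SameCycle 0 (e x).succ :=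
      ⟨1, by simp [one_apply_zero, h]⟩
    exact h1.trans h2
  · exact ⟨1, by simp only [zpow_one, one_apply_succ e q x, if_neg h]⟩

lemma sameCycle_succ_succ {a b : Fin n} (h : e.SameCycle a b) :
    (Equiv.Perm.decomposeFin.symm (q.succ, e)).SameCycle a.succ b.succ := by
  obtain ⟨k, -, rfl⟩ := h.exists_pow_eq'
  induction k with
  | zero => simpa using SameCycle.refl _ _
  | succ m ih =>
    have h3 : (e ^ (m+1)) a = e ((e ^ m) a) := by
      have := pow_succ' e m
      rw [this]; rfl
    rw [h3]
    exact (ih (sameCycle_of_nat m rfl)).trans (step_sameCycle e q _)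

lemma orbit_one_succ (a : Fin n) :
    cycleOrbit (Equiv.Perm.decomposeFin.symm (q.succ, e)) a.succ
      = (cycleOrbit e a).map (Fin.succEmb n)
        ∪ (if q ∈ cycleOrbit e a then {0} else ∅) := by
  ext j
  constructor
  · intro hj
    refine mem_closed ?_ ?_ (mem_cycleOrbit.1 hj)
    · rintro x hx
      simp only [Finset.mem_union, Finset.mem_map] at hx
      rcases hx with ⟨b, hb, rfl⟩ | hx
      · have hb' := mem_cycleOrbit.1 hb
        have hse : ((Fin.succEmb n) b : Fin (n+1)) = b.succ := rfl
        rw [hse, one_apply_succ]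
        by_cases h : e b = q
        · rw [if_pos h]
          have hsc : e.SameCycle b q := h ▸ ⟨1, by simp⟩
          have hq : q ∈ cycleOrbit e a := mem_cycleOrbit.2 (hb'.trans hsc)
          simp [hq]
        · rw [if_neg h]
          exact Finset.mem_union_left _
            (Finset.mem_map.2 ⟨e b, mem_cycleOrbit.2 (hb'.trans ⟨1, by simp⟩), rfl⟩)
      · split_ifs at hx with h
        · simp only [Finset.mem_singleton] at hx
          subst hx
          rw [one_apply_zero]
          exact Finset.mem_union_left _ (Finset.mem_map.2 ⟨q, h, rfl⟩)
        · simp at hx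
    · exact Finset.mem_union_left _
        (Finset.mem_map.2 ⟨a, mem_cycleOrbit.2 (SameCycle.refl _ _), rfl⟩)
  · intro hj
    rw [mem_cycleOrbit]
    simp only [Finset.mem_union, Finset.mem_map] at hj
    rcases hj with ⟨b, hb, rfl⟩ | hj
    · exact sameCycle_succ_succ e q (mem_cycleOrbit.1 hb)
    · split_ifs at hj with h
      · simp only [Finset.mem_singleton] at hj
        subst hj
        have h1 := sameCycle_succ_succ e q (mem_cycleOrbit.1 h)
        have h2 : (Equiv.Perm.decomposeFin.symm (q.succ, e)).SameCycle (0 : Fin (n+1)) q.succ :=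
          ⟨1, by simp [one_apply_zero]⟩
        exact h1.trans h2.symm
      · simp at hj

lemma orbit_one_zero :
    cycleOrbit (Equiv.Perm.decomposeFin.symm (q.succ, e)) 0
      = cycleOrbit (Equiv.Perm.decomposeFin.symm (q.succ, e)) q.succ :=
  cycleOrbit_congr ⟨1, by simp [one_apply_zero]⟩

end SP3

namespace SP4
open Equiv Equiv.Perm SP SP2 SP3

variable {n : ℕ} (e : Equiv.Perm (Fin n)) (q : Fin n)

lemma prod_map_succ (s : Finset (Fin n)) (f : Fin (n+1) → ℤˣ) :
    ∏ j ∈ s.map (Fin.succEmb n), f j = ∏ x ∈ s, f x.succ := by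
  rw [Finset.prod_map]; rfl

lemma prod_twist (t : Finset (Fin n)) (f : Fin n → ℤˣ) (c : ℤˣ) :
    ∏ x ∈ t, (if x = q then f x * c else f x)
      = (∏ x ∈ t, f x) * (if q ∈ t then c else 1) := by
  by_cases hq : q ∈ t
  · rw [if_pos hq, ← Finset.mul_prod_erase t _ hq, ← Finset.mul_prod_erase t f hq,
      if_pos rfl]
    have : ∏ x ∈ t.erase q, (if x = q then f x * c else f x) = ∏ x ∈ t.erase q, f x :=
      Finset.prod_congr rfl fun x hx => if_neg (Finset.ne_of_mem_erase hx)
    rw [this]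
    rw [mul_assoc, mul_assoc, mul_comm c]
  · rw [if_neg hq, mul_one]
    exact Finset.prod_congr rfl fun x hx => if_neg (fun h : x = q => hq (h ▸ hx))

lemma disj_map_zero (s : Finset (Fin n)) :
    Disjoint (s.map (Fin.succEmb n)) ({0} : Finset (Fin (n+1))) := by
  simp only [Finset.disjoint_singleton_right, Finset.mem_map]
  rintro ⟨b, -, hb⟩
  exact Fin.succ_ne_zero b hb

lemma onc_zero_iff (s : ℤˣ) (ε : Fin n → ℤˣ) :
    OnlyNegativeCycles (Fin.cons s ε, Equiv.Perm.decomposeFin.symm ((0 : Fin (n+1)), e))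
      ↔ (s = -1 ∧ OnlyNegativeCycles (ε, e)) := by
  constructor
  · intro h
    have h0 := h 0
    rw [orbit_zero_zero] at h0
    simp only [Finset.prod_singleton, Fin.cons_zero] at h0
    refine ⟨h0, fun a => ?_⟩
    have ha := h a.succ
    rw [orbit_zero_succ, prod_map_succ] at ha
    simpa only [Fin.cons_succ] using ha
  · rintro ⟨rfl, h⟩ i
    refine Fin.cases ?_ ?_ i
    · rw [orbit_zero_zero]
      simp
    · intro a
      rw [orbit_zero_succ, prod_map_succ]
      simpa only [Fin.cons_succ] using h a

lemma orbit_prod_one (s : ℤˣ) (ε : Fin n → ℤˣ) (a : Fin n) :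
    ∏ j ∈ cycleOrbit (Equiv.Perm.decomposeFin.symm (q.succ, e)) a.succ,
      (Fin.cons s (fun x => if x = q then ε x * s else ε x) : Fin (n+1) → ℤˣ) j
      = ∏ x ∈ cycleOrbit e a, ε x := by
  rw [orbit_one_succ]
  by_cases hq : q ∈ cycleOrbit e a
  · rw [if_pos hq, Finset.prod_union (disj_map_zero _), prod_map_succ]
    simp only [Fin.cons_succ, Finset.prod_singleton, Fin.cons_zero]
    rw [prod_twist, if_pos hq]
    rw [mul_assoc, Int.units_mul_self, mul_one]
  · rw [if_neg hq, Finset.union_empty, prod_map_succ]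
    simp only [Fin.cons_succ]
    rw [prod_twist, if_neg hq, mul_one]

lemma onc_one_iff (s : ℤˣ) (ε : Fin n → ℤˣ) :
    OnlyNegativeCycles (Fin.cons s (fun x => if x = q then ε x * s else ε x),
        Equiv.Perm.decomposeFin.symm (q.succ, e))
      ↔ OnlyNegativeCycles (ε, e) := by
  constructor
  · intro h a
    have := h a.succ
    rwa [orbit_prod_one] at this
  · intro h i
    refine Fin.cases ?_ ?_ i
    · rw [show cycleOrbit (Equiv.Perm.decomposeFin.symm (q.succ, e)) 0
          = cycleOrbit (Equiv.Perm.decomposeFin.symm (q.succ, e)) q.succ from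
          orbit_one_zero e q]
      rw [orbit_prod_one]
      exact h q
    · intro a
      rw [orbit_prod_one]
      exact h a

lemma univ_prod_cons (s : ℤˣ) (g : Fin n → ℤˣ) :
    ∏ i, (Fin.cons s g : Fin (n+1) → ℤˣ) i = s * ∏ x, g x := by
  rw [Fin.prod_univ_succ]
  simp

lemma univ_prod_one (s : ℤˣ) (ε : Fin n → ℤˣ) :
    ∏ i, (Fin.cons s (fun x => if x = q then ε x * s else ε x) : Fin (n+1) → ℤˣ) i
      = ∏ x, ε x := by
  rw [univ_prod_cons, prod_twist, if_pos (Finset.mem_univ q)]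
  have : ∀ u v : ℤˣ, u * (v * u) = v := fun u v => by
    rw [mul_comm v u, ← mul_assoc, Int.units_mul_self, one_mul]
  exact this s _

end SP4

namespace SP5
open Equiv Equiv.Perm SP SP2 SP3 SP4

abbrev E (n : ℕ) (P : ℤˣ) :=
  {w : (Fin n → ℤˣ) × Equiv.Perm (Fin n) // OnlyNegativeCycles w ∧ ∏ i, w.1 i = P}

def f {n : ℕ} (P : ℤˣ) : (E n (-P)) ⊕ (ℤˣ × Fin n × E n P) → E (n+1) P
  | Sum.inl ⟨(ε, e), h⟩ =>
    ⟨(Fin.cons (-1) ε, Equiv.Perm.decomposeFin.symm (0, e)),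
      (onc_zero_iff e (-1) ε).2 ⟨rfl, h.1⟩,
      by rw [univ_prod_cons, h.2]; simp⟩
  | Sum.inr (s, q, ⟨(ε, e), h⟩) =>
    ⟨(Fin.cons s (fun x => if x = q then ε x * s else ε x),
        Equiv.Perm.decomposeFin.symm (q.succ, e)),
      (onc_one_iff e q s ε).2 h.1,
      by rw [univ_prod_one, h.2]⟩

lemma f_inj {n : ℕ} (P : ℤˣ) : Function.Injective (f (n := n) P) := by
  rintro (⟨⟨ε, e⟩, h⟩ | ⟨s, q, ⟨⟨ε, e⟩, h⟩⟩) (⟨⟨ε', e'⟩, h'⟩ | ⟨s', q', ⟨⟨ε', e'⟩, h'⟩⟩) heq <;>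
      simp only [f, Subtype.mk.injEq, Prod.mk.injEq] at heq
  · obtain ⟨h1, h2⟩ := heq
    obtain ⟨-, he⟩ := Prod.mk.injEq .. ▸ Equiv.Perm.decomposeFin.symm.injective h2
    have hε : ε = ε' := funext fun x => by
      have := congrFun h1 x.succ
      simpa [Fin.cons_succ] using this
    subst he; subst hε
    rfl
  · obtain ⟨-, h2⟩ := heq
    obtain ⟨hp, -⟩ := Prod.mk.injEq .. ▸ Equiv.Perm.decomposeFin.symm.injective h2
    exact absurd hp.symm (Fin.succ_ne_zero q')
  · obtain ⟨-, h2⟩ := heq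
    obtain ⟨hp, -⟩ := Prod.mk.injEq .. ▸ Equiv.Perm.decomposeFin.symm.injective h2
    exact absurd hp (Fin.succ_ne_zero q)
  · obtain ⟨h1, h2⟩ := heq
    obtain ⟨hp, he⟩ := Prod.mk.injEq .. ▸ Equiv.Perm.decomposeFin.symm.injective h2
    have hq : q = q' := by simpa [Fin.succ_inj] using hp
    have hs : s = s' := by
      have := congrFun h1 0
      simpa using this
    subst hq; subst hs; subst he
    have hε : ε = ε' := funext fun x => by
      have hx := congrFun h1 x.succ
      simp only [Fin.cons_succ] at hx
      by_cases hxq : x = q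
      · rw [if_pos hxq, if_pos hxq] at hx
        exact mul_right_cancel hx
      · rwa [if_neg hxq, if_neg hxq] at hx
    subst hε
    rfl

lemma f_surj {n : ℕ} (P : ℤˣ) : Function.Surjective (f (n := n) P) := by
  rintro ⟨⟨ε, π⟩, h1, h2⟩
  have hπ : Equiv.Perm.decomposeFin.symm
      ((Equiv.Perm.decomposeFin π).1, (Equiv.Perm.decomposeFin π).2) = π := by
    rw [Prod.mk.eta]
    exact Equiv.symm_apply_apply _ _
  set p := (Equiv.Perm.decomposeFin π).1 with hp
  set e := (Equiv.Perm.decomposeFin π).2 with he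
  rcases Fin.eq_zero_or_eq_succ p with hp0 | ⟨q, hq⟩
  · rw [hp0] at hπ
    have hε0 : ε 0 = -1 := by
      have := h1 0
      rw [← hπ, orbit_zero_zero] at this
      simpa using this
    have hcons : ε = Fin.cons (-1) (fun x => ε x.succ) := by
      refine funext (Fin.cases ?_ ?_)
      · rw [Fin.cons_zero, hε0]
      · intro x
        rw [Fin.cons_succ]
    refine ⟨Sum.inl ⟨(fun x => ε x.succ, e), ?_, ?_⟩, ?_⟩
    · have := h1
      rw [← hπ, hcons] at this
      exact ((onc_zero_iff e (-1) _).1 this).2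
    · have := h2
      rw [hcons, univ_prod_cons] at this
      rw [← this]
      simp
    · apply Subtype.ext
      simp only [f]
      exact Prod.ext hcons.symm hπ
  · rw [hq] at hπ
    set s := ε 0 with hs
    set ε' : Fin n → ℤˣ := fun x => if x = q then ε x.succ * s else ε x.succ with hε'
    have hcons : ε = Fin.cons s (fun x => if x = q then ε' x * s else ε' x) := by
      refine funext (Fin.cases ?_ ?_)
      · rw [Fin.cons_zero]
      · intro x
        rw [Fin.cons_succ]
        simp only [hε']
        by_cases hxq : x = q
        · simp [hxq, mul_assoc, Int.units_mul_self]
        · simp [hxq]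
    refine ⟨Sum.inr ⟨s, q, ⟨(ε', e), ?_, ?_⟩⟩, ?_⟩
    · have := h1
      rw [← hπ, hcons] at this
      exact (onc_one_iff e q s ε').1 this
    · have := h2
      rw [hcons, univ_prod_one] at this
      exact this
    · apply Subtype.ext
      simp only [f]
      exact Prod.ext hcons.symm hπ

lemma card_succ (n : ℕ) (P : ℤˣ) :
    Nat.card (E (n+1) P) = Nat.card (E n (-P)) + 2 * n * Nat.card (E n P) := by
  rw [← Nat.card_eq_of_bijective _ ⟨f_inj (n := n) P, f_surj (n := n) P⟩,
    Nat.card_sum, Nat.card_prod, Nat.card_prod]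
  have hu : Nat.card ℤˣ = 2 := by simp [Nat.card_eq_fintype_card]
  have hf : Nat.card (Fin n) = n := by simp
  rw [hu, hf]
  ring

lemma card_zero_one : Nat.card (E 0 1) = 1 := by
  have : Unique (E 0 1) :=
    { default := ⟨(fun _ => 1, 1), fun i => i.elim0, by simp⟩
      uniq := fun x => Subtype.ext
        (Prod.ext (funext fun i => i.elim0) (Equiv.ext fun i => i.elim0)) }
  exact Nat.card_unique

lemma card_zero_neg : Nat.card (E 0 (-1)) = 0 := by
  have : IsEmpty (E 0 (-1)) := ⟨fun x => by
    have h := x.2.2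
    simp only [Finset.univ_eq_empty, Finset.prod_empty] at h
    exact absurd h (by decide)⟩
  exact Nat.card_of_isEmpty

lemma dfact_step (n : ℕ) : (2 * n + 1)‼ = (2 * n + 1) * (2 * (n + 1) - 3)‼ := by
  cases n with
  | zero => decide
  | succ m =>
    have h2 : 2 * (m + 1 + 1) - 3 = 2 * m + 1 := by omega
    have h1 : 2 * (m + 1) + 1 = (2 * m + 1) + 2 := by ring
    rw [h2, h1, Nat.doubleFactorial_add_two]

lemma main : ∀ n : ℕ,
    Nat.card (E (n+1) (-1)) = (n + 1) * (2 * (n + 1) - 3)‼ ∧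
    Nat.card (E (n+1) 1) = n * (2 * (n + 1) - 3)‼ := by
  intro n
  induction n with
  | zero =>
    constructor
    · rw [card_succ, show (-(-1) : ℤˣ) = 1 from by decide, card_zero_one]
      norm_num [Nat.doubleFactorial]
    · rw [card_succ, show (-(1:ℤˣ)) = -1 from rfl, card_zero_neg]
      simp
  | succ m ih =>
    obtain ⟨ih1, ih2⟩ := ih
    have hD : (2 * (m + 1 + 1) - 3)‼ = (2 * m + 1) * (2 * (m + 1) - 3)‼ := by
      have : 2 * (m + 1 + 1) - 3 = 2 * m + 1 := by omega
      rw [this, dfact_step]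
    constructor
    · rw [card_succ, show (-(-1) : ℤˣ) = 1 from by decide, ih1, ih2, hD]
      ring
    · rw [card_succ, show (-(1:ℤˣ)) = -1 from rfl, ih1, ih2, hD]
      ring

end SP5

theorem stmt_5 (n : ℕ) (hn : 1 ≤ n) :
    Nat.card {w : (Fin n → ℤˣ) × Equiv.Perm (Fin n) //
        OnlyNegativeCycles w ∧ ∏ i : Fin n, w.1 i = -1}
      = n * (2 * n - 3)‼ := by
  obtain ⟨m, rfl⟩ : ∃ m, n = m + 1 := ⟨n - 1, by omega⟩
  exact (SP5.main m).1
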